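/- Let n ≥ 1, N = 2^n, 0 ≤ ε ≤ 1, and let E be an N×N unitary matrix over ℂ with |Tr(E)| ≥ N(1 − ε²). Let C₀ = ∑_{P ∈ 𝒫_n} r_P·P be an N×N matrix whose Pauli coefficients r_P satisfy: the support {P : r_P ≠ 0} has exactly M elements and |r_P| = 1/sqrt(M) for every P in the support. Then for every P₁ ∈ 𝒫_n with r_{P₁} ≠ 0 and every P₀ ∈ 𝒫_n with r_{P₀} = 0: |Tr(E·C₀·P₁)|/N − |Tr(E·C₀·P₀)|/N ≥ (1 − ε²)/sqrt(M) − 2·sqrt(M)·sqrt(2ε² − ε⁴). -/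

import Mathlib

open Matrix

/-- The four single-qubit Pauli matrices: I, X, Y, Z. -/
noncomputable def pauliOne : Fin 4 → Matrix (Fin 2) (Fin 2) ℂ
  | 0 => 1
  | 1 => !![0, 1; 1, 0]
  | 2 => !![0, -Complex.I; Complex.I, 0]
  | 3 => !![1, 0; 0, -1]

/-- The `n`-qubit Pauli matrix indexed by `s : Fin n → Fin 4`: the `n`-fold
Kronecker (tensor) product of single-qubit Paulis, realized as a matrix on
the index type `Fin n → Fin 2` (of cardinality `2 ^ n`). -/
noncomputable def PauliTensor (n : ℕ) (s : Fin n → Fin 4) :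
    Matrix (Fin n → Fin 2) (Fin n → Fin 2) ℂ :=
  Matrix.of fun x y => ∏ i, pauliOne (s i) (x i) (y i)

/-!
The Pauli matrices are an orthogonal basis, `Tr (P_s P_t) = N δ_{st}`, so Parseval gives
`∑_t |Tr (E P_t)|² = N Tr (E Eᴴ) = N²` for unitary `E`. Since the identity coefficient already has
`|Tr E| ≥ N (1 - ε²)`, every other coefficient satisfies
`|Tr (E P_t)| ≤ N √(1 - (1 - ε²)²) = N √(2ε² - ε⁴)`.

Products of Paulis are Paulis up to a unit phase, `P_s P_u = c · P_{s ⊕ u}` with `s ⊕ u = 0` iff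
`s = u`, hence `Tr (E C₀ P_u) = ∑_{r_s ≠ 0} r_s c_s Tr (E P_{s ⊕ u})`. For `u = s₁` the term
`s = s₁` is `r_{s₁} c Tr E`, of modulus at least `N (1 - ε²)/√M`, and the remaining `M - 1` terms are
at most `N √(2ε² - ε⁴)/√M` each; for `u = s₀` all `M` terms are that small. The gap is therefore at
least `(1 - ε²)/√M - (2M - 1) √(2ε² - ε⁴)/√M`.
-/

open Finset

theorem sub_card_sub_one_mul_le_norm_sum {ι E : Type*} [SeminormedAddCommGroup E]
    {s : Finset ι} {f : ι → E} {i : ι} (hi : i ∈ s) {a b : ℝ} (ha : a ≤ ‖f i‖)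
    (hb : ∀ j ∈ s, j ≠ i → ‖f j‖ ≤ b) :
    a - (#s - 1 : ℝ) * b ≤ ‖∑ j ∈ s, f j‖ := by
  classical
  have hrest : ‖∑ j ∈ s.erase i, f j‖ ≤ (#s - 1 : ℝ) * b := by
    calc ‖∑ j ∈ s.erase i, f j‖ ≤ ∑ j ∈ s.erase i, b :=
          norm_sum_le_of_le _ fun j hj => hb j (mem_of_mem_erase hj) (ne_of_mem_erase hj)
      _ = (#s - 1 : ℝ) * b := by
          rw [sum_const, card_erase_of_mem hi, nsmul_eq_mul, Nat.cast_pred (card_pos.mpr ⟨i, hi⟩)]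
  rw [← add_sum_erase s f hi]
  linarith [norm_sub_le_norm_add (f i) (∑ j ∈ s.erase i, f j)]

theorem norm_sum_le_card_mul {ι E : Type*} [SeminormedAddCommGroup E] {s : Finset ι}
    {f : ι → E} {b : ℝ} (hb : ∀ j ∈ s, ‖f j‖ ≤ b) :
    ‖∑ j ∈ s, f j‖ ≤ #s * b := by
  simpa using norm_sum_le_of_le s hb

theorem le_sqrt_sum_sq_sub_sq {ι : Type*} [Fintype ι] (x : ι → ℝ) {i j : ι} (hij : i ≠ j)
    {a : ℝ} (ha : 0 ≤ a) (hj : a ≤ x j) :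
    x i ≤ √(∑ k, x k ^ 2 - a ^ 2) := by
  classical
  have hpair : x i ^ 2 + x j ^ 2 ≤ ∑ k, x k ^ 2 := by
    rw [← sum_pair (f := fun k => x k ^ 2) hij]
    exact sum_le_univ_sum_of_nonneg fun k => sq_nonneg (x k)
  have hsq : a ^ 2 ≤ x j ^ 2 := pow_le_pow_left₀ ha hj 2
  exact (le_abs_self _).trans (Real.abs_le_sqrt (by linarith))

theorem of_prod_mul_of_prod {ι m R : Type*} [Fintype ι] [DecidableEq ι] [Fintype m]
    [CommSemiring R] (A B : ι → Matrix m m R) :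
    (of fun x y : ι → m => ∏ i, A i (x i) (y i)) * (of fun x y : ι → m => ∏ i, B i (x i) (y i))
      = of fun x y => ∏ i, (A i * B i) (x i) (y i) := by
  ext x y
  simp only [mul_apply, of_apply, ← prod_mul_distrib]
  exact (Fintype.prod_sum fun i k => A i (x i) k * B i k (y i)).symm

theorem fin_four_xor_eq_zero_iff {a b : Fin 4} : a ^^^ b = 0 ↔ a = b := by
  revert a b
  decide

-- With I, X, Y, Z indexed by 0, 1, 2, 3, Paulis multiply as the indices xor, up to a phase; as
-- every Pauli squares to the identity, that phase is `Tr (σ_a σ_b σ_{a ⊕ b}) / 2`.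
theorem pauliOne_mul_pauliOne (a b : Fin 4) :
    ∃ c : ℂ, ‖c‖ = 1 ∧ pauliOne a * pauliOne b = c • pauliOne (a ^^^ b) := by
  refine ⟨(pauliOne a * pauliOne b * pauliOne (a ^^^ b)).trace / 2, ?_, ?_⟩
  · fin_cases a <;> fin_cases b <;> simp [pauliOne, trace]
  · fin_cases a <;> fin_cases b <;> ext i j <;> fin_cases i <;> fin_cases j <;>
      simp [pauliOne, mul_apply, trace]

theorem pauliOne_conjTranspose (a : Fin 4) : (pauliOne a)ᴴ = pauliOne a := by
  fin_cases a <;> ext i j <;> fin_cases i <;> fin_cases j <;> simp [pauliOne]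

theorem sum_pauliOne_apply_mul_pauliOne_apply (x y z w : Fin 2) :
    ∑ a, pauliOne a x y * pauliOne a z w = if x = w ∧ y = z then 2 else 0 := by
  fin_cases x <;> fin_cases y <;> fin_cases z <;> fin_cases w <;>
    norm_num [pauliOne, Fin.sum_univ_four, Complex.ext_iff]

variable {n : ℕ}

theorem PauliTensor_zero : PauliTensor n 0 = 1 := by
  ext x y
  simp only [PauliTensor, of_apply, pauliOne, one_apply]
  rw [Fintype.prod_ite_zero, prod_const_one]
  simp [funext_iff]

theorem PauliTensor_conjTranspose (s : Fin n → Fin 4) : (PauliTensor n s)ᴴ = PauliTensor n s := by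
  ext x y
  simp only [conjTranspose_apply, PauliTensor, of_apply, star_prod]
  exact prod_congr rfl fun i _ => by rw [← conjTranspose_apply, pauliOne_conjTranspose]

theorem PauliTensor_mul_PauliTensor (s t : Fin n → Fin 4) :
    ∃ c : ℂ, ‖c‖ = 1 ∧
      PauliTensor n s * PauliTensor n t = c • PauliTensor n (fun i => s i ^^^ t i) := by
  choose c hc hmul using fun i => pauliOne_mul_pauliOne (s i) (t i)
  refine ⟨∏ i, c i, by simp [hc], ?_⟩
  rw [PauliTensor, PauliTensor, of_prod_mul_of_prod]
  ext x y
  simp [PauliTensor, hmul, prod_mul_distrib]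

theorem fun_xor_eq_zero_iff {s u : Fin n → Fin 4} :
    (fun i => s i ^^^ u i) = 0 ↔ s = u := by
  simp only [funext_iff, Pi.zero_apply, fin_four_xor_eq_zero_iff]

theorem sum_PauliTensor_apply_mul_PauliTensor_apply (x y z w : Fin n → Fin 2) :
    ∑ s, PauliTensor n s x y * PauliTensor n s z w = if x = w ∧ y = z then 2 ^ n else 0 := by
  simp only [PauliTensor, of_apply, ← prod_mul_distrib]
  rw [← Fintype.prod_sum fun i a => pauliOne a (x i) (y i) * pauliOne a (z i) (w i)]
  simp only [sum_pauliOne_apply_mul_pauliOne_apply]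
  rw [Fintype.prod_ite_zero, prod_const, card_univ, Fintype.card_fin]
  simp only [funext_iff, forall_and]

theorem sum_trace_mul_PauliTensor_smul_PauliTensor (A : Matrix (Fin n → Fin 2) (Fin n → Fin 2) ℂ) :
    ∑ s, (A * PauliTensor n s).trace • PauliTensor n s = (2 ^ n : ℂ) • A := by
  ext z w
  calc (∑ s, (A * PauliTensor n s).trace • PauliTensor n s) z w
      = ∑ x, ∑ y, A x y * ∑ s, PauliTensor n s y x * PauliTensor n s z w := by
        simp only [Matrix.sum_apply, Matrix.smul_apply, smul_eq_mul, trace, Matrix.diag,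
          mul_apply, sum_mul, mul_sum, mul_assoc]
        rw [sum_comm]
        exact sum_congr rfl fun x _ => sum_comm
    _ = ((2 ^ n : ℂ) • A) z w := by
        simp [sum_PauliTensor_apply_mul_PauliTensor_apply, ite_and, mul_comm]

theorem sum_trace_mul_PauliTensor_mul_trace_mul_PauliTensor
    (A B : Matrix (Fin n → Fin 2) (Fin n → Fin 2) ℂ) :
    ∑ s, (A * PauliTensor n s).trace * (B * PauliTensor n s).trace = 2 ^ n * (A * B).trace := by
  have h := congrArg (fun X => (X * B).trace) (sum_trace_mul_PauliTensor_smul_PauliTensor A)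
  simp only [sum_mul, trace_sum, smul_mul_assoc, trace_smul, smul_eq_mul] at h
  simpa only [trace_mul_comm _ B] using h

theorem sum_norm_trace_mul_PauliTensor_sq {E : Matrix (Fin n → Fin 2) (Fin n → Fin 2) ℂ}
    (hE : E ∈ unitaryGroup (Fin n → Fin 2) ℂ) :
    ∑ s, ‖(E * PauliTensor n s).trace‖ ^ 2 = ((2 : ℝ) ^ n) ^ 2 := by
  have h := sum_trace_mul_PauliTensor_mul_trace_mul_PauliTensor E Eᴴ
  have hconj (s : Fin n → Fin 4) :
      (Eᴴ * PauliTensor n s).trace = star (E * PauliTensor n s).trace := by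
    rw [← trace_conjTranspose, conjTranspose_mul, PauliTensor_conjTranspose, trace_mul_comm]
  have hEE : E * Eᴴ = 1 := mem_unitaryGroup_iff.mp hE
  simp only [hconj, Complex.star_def, Complex.mul_conj', hEE, trace_one, Fintype.card_fun,
    Fintype.card_fin] at h
  rw [sq]
  exact_mod_cast h

theorem norm_trace_mul_PauliTensor_le {E : Matrix (Fin n → Fin 2) (Fin n → Fin 2) ℂ}
    (hE : E ∈ unitaryGroup (Fin n → Fin 2) ℂ) {c : ℝ} (hc : 0 ≤ c)
    (hEtr : 2 ^ n * c ≤ ‖E.trace‖) {t : Fin n → Fin 4} (ht : t ≠ 0) :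
    ‖(E * PauliTensor n t).trace‖ ≤ 2 ^ n * √(1 - c ^ 2) := by
  have h := le_sqrt_sum_sq_sub_sq (fun s => ‖(E * PauliTensor n s).trace‖) ht
    (by positivity : 0 ≤ 2 ^ n * c) (by simpa [PauliTensor_zero] using hEtr)
  rwa [sum_norm_trace_mul_PauliTensor_sq hE,
    show ((2 : ℝ) ^ n) ^ 2 - (2 ^ n * c) ^ 2 = (2 ^ n) ^ 2 * (1 - c ^ 2) by ring,
    Real.sqrt_mul (by positivity), Real.sqrt_sq (by positivity)] at h

theorem exists_trace_mul_sum_smul_PauliTensor_mul_eq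
    (E : Matrix (Fin n → Fin 2) (Fin n → Fin 2) ℂ) (r : (Fin n → Fin 4) → ℂ) (u : Fin n → Fin 4) :
    ∃ f : (Fin n → Fin 4) → ℂ,
      (∀ s, ‖f s‖ = ‖r s‖ * ‖(E * PauliTensor n (fun i => s i ^^^ u i)).trace‖) ∧
        (E * (∑ s, r s • PauliTensor n s) * PauliTensor n u).trace
          = ∑ s ∈ univ.filter fun s => r s ≠ 0, f s := by
  choose c hc hmul using fun s => PauliTensor_mul_PauliTensor (n := n) s u
  refine ⟨fun s => r s * c s * (E * PauliTensor n (fun i => s i ^^^ u i)).trace,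
    fun s => by simp [hc], ?_⟩
  rw [sum_filter_of_ne fun s _ hs => left_ne_zero_of_mul (left_ne_zero_of_mul hs)]
  simp only [Matrix.mul_sum, Matrix.sum_mul, trace_sum, mul_smul_comm, smul_mul_assoc,
    hmul, trace_smul, smul_eq_mul, mul_assoc]

theorem le_norm_trace_mul_sum_smul_PauliTensor_mul_of_ne_zero
    {E : Matrix (Fin n → Fin 2) (Fin n → Fin 2) ℂ} (hE : E ∈ unitaryGroup (Fin n → Fin 2) ℂ)
    {c : ℝ} (hc : 0 ≤ c) (hEtr : 2 ^ n * c ≤ ‖E.trace‖)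
    {r : (Fin n → Fin 4) → ℂ} {ρ : ℝ} (hr : ∀ s, r s ≠ 0 → ‖r s‖ = ρ)
    {u : Fin n → Fin 4} (hu : r u ≠ 0) :
    2 ^ n * ρ * c - (#(univ.filter fun s => r s ≠ 0) - 1 : ℝ) * (2 ^ n * ρ * √(1 - c ^ 2))
      ≤ ‖(E * (∑ s, r s • PauliTensor n s) * PauliTensor n u).trace‖ := by
  have hρ : 0 ≤ ρ := hr u hu ▸ norm_nonneg _
  obtain ⟨f, hf, h⟩ := exists_trace_mul_sum_smul_PauliTensor_mul_eq E r u
  rw [h]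
  refine sub_card_sub_one_mul_le_norm_sum (by simpa using hu) ?_ fun s hs hsu => ?_
  · rw [hf, fun_xor_eq_zero_iff.mpr rfl, PauliTensor_zero, mul_one, hr u hu]
    nlinarith
  · rw [hf, hr s (by simpa using hs)]
    nlinarith [norm_trace_mul_PauliTensor_le hE hc hEtr (mt fun_xor_eq_zero_iff.mp hsu)]

theorem norm_trace_mul_sum_smul_PauliTensor_mul_le_of_eq_zero
    {E : Matrix (Fin n → Fin 2) (Fin n → Fin 2) ℂ} (hE : E ∈ unitaryGroup (Fin n → Fin 2) ℂ)
    {c : ℝ} (hc : 0 ≤ c) (hEtr : 2 ^ n * c ≤ ‖E.trace‖)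
    {r : (Fin n → Fin 4) → ℂ} {ρ : ℝ} (hr : ∀ s, r s ≠ 0 → ‖r s‖ = ρ)
    {u : Fin n → Fin 4} (hu : r u = 0) :
    ‖(E * (∑ s, r s • PauliTensor n s) * PauliTensor n u).trace‖
      ≤ #(univ.filter fun s => r s ≠ 0) * (2 ^ n * ρ * √(1 - c ^ 2)) := by
  obtain ⟨f, hf, h⟩ := exists_trace_mul_sum_smul_PauliTensor_mul_eq E r u
  rw [h]
  refine norm_sum_le_card_mul fun s hs => ?_
  have hs : r s ≠ 0 := by simpa using hs
  have hsu : s ≠ u := fun hsu => hs (hsu ▸ hu)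
  rw [hf, hr s hs]
  nlinarith [norm_trace_mul_PauliTensor_le hE hc hEtr (mt fun_xor_eq_zero_iff.mp hsu),
    hr s hs ▸ norm_nonneg (r s)]

theorem trace_gap_bound_general (n : ℕ)
    (ε : ℝ) (hε0 : 0 ≤ ε) (hε1 : ε ≤ 1)
    (E : Matrix (Fin n → Fin 2) (Fin n → Fin 2) ℂ)
    (hE : E ∈ Matrix.unitaryGroup (Fin n → Fin 2) ℂ)
    (hEtr : (2 : ℝ) ^ n * (1 - ε ^ 2) ≤ ‖E.trace‖)
    (r : (Fin n → Fin 4) → ℂ) (C₀ : Matrix (Fin n → Fin 2) (Fin n → Fin 2) ℂ)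
    (hC₀ : C₀ = ∑ s : Fin n → Fin 4, r s • PauliTensor n s)
    (M : ℕ) (hM : (Finset.univ.filter (fun s => r s ≠ 0)).card = M)
    (hr : ∀ s : Fin n → Fin 4, r s ≠ 0 → ‖r s‖ = 1 / Real.sqrt M)
    (s₁ : Fin n → Fin 4) (hs₁ : r s₁ ≠ 0)
    (s₀ : Fin n → Fin 4) (hs₀ : r s₀ = 0) :
    (1 - ε ^ 2) / Real.sqrt M - 2 * Real.sqrt M * Real.sqrt (2 * ε ^ 2 - ε ^ 4)
        ≤ ‖(E * C₀ * PauliTensor n s₁).trace‖ / (2 : ℝ) ^ n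
          - ‖(E * C₀ * PauliTensor n s₀).trace‖ / (2 : ℝ) ^ n := by
  have hc : 0 ≤ 1 - ε ^ 2 := by nlinarith
  have hδ : √(1 - (1 - ε ^ 2) ^ 2) = √(2 * ε ^ 2 - ε ^ 4) := by ring_nf
  have h₁ := le_norm_trace_mul_sum_smul_PauliTensor_mul_of_ne_zero hE hc hEtr hr hs₁
  have h₀ := norm_trace_mul_sum_smul_PauliTensor_mul_le_of_eq_zero hE hc hEtr hr hs₀
  rw [hM, hδ, ← hC₀] at h₁ h₀
  set q := √(M : ℝ)
  have hq : q ^ 2 = M := Real.sq_sqrt (Nat.cast_nonneg _)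
  have hNδ : 0 ≤ 2 ^ n * (1 / q) * √(2 * ε ^ 2 - ε ^ 4) := by positivity
  rw [← sub_div, le_div_iff₀ (by positivity)]
  calc ((1 - ε ^ 2) / q - 2 * q * √(2 * ε ^ 2 - ε ^ 4)) * 2 ^ n
      = 2 ^ n * (1 / q) * (1 - ε ^ 2) - 2 * M * (2 ^ n * (1 / q) * √(2 * ε ^ 2 - ε ^ 4)) := by
        rw [← hq]
        field_simp
    _ ≤ ‖(E * C₀ * PauliTensor n s₁).trace‖ - ‖(E * C₀ * PauliTensor n s₀).trace‖ := by
        linarith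

/-- Theorem: lower bound on the gap `|Tr (E * C₀ * P₁)| / N - |Tr (E * C₀ * P₀)| / N`
between an on-support Pauli `P₁` and an off-support Pauli `P₀`, when `E` is a unitary with `|Tr E| ≥ N (1 - ε²)` and
all nonzero Pauli coefficients of `C₀` have modulus `1 / √M`, `M` being the
size of the support. -/
theorem trace_gap_bound (n : ℕ) (hn : 1 ≤ n)
    (ε : ℝ) (hε0 : 0 ≤ ε) (hε1 : ε ≤ 1)
    (E : Matrix (Fin n → Fin 2) (Fin n → Fin 2) ℂ)
    (hE : E ∈ Matrix.unitaryGroup (Fin n → Fin 2) ℂ)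
    (hEtr : (2 : ℝ) ^ n * (1 - ε ^ 2) ≤ ‖E.trace‖)
    (r : (Fin n → Fin 4) → ℂ) (C₀ : Matrix (Fin n → Fin 2) (Fin n → Fin 2) ℂ)
    (hC₀ : C₀ = ∑ s : Fin n → Fin 4, r s • PauliTensor n s)
    (M : ℕ) (hM : (Finset.univ.filter (fun s => r s ≠ 0)).card = M)
    (hr : ∀ s : Fin n → Fin 4, r s ≠ 0 → ‖r s‖ = 1 / Real.sqrt M)
    (s₁ : Fin n → Fin 4) (hs₁ : r s₁ ≠ 0)
    (s₀ : Fin n → Fin 4) (hs₀ : r s₀ = 0) :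
    (1 - ε ^ 2) / Real.sqrt M - 2 * Real.sqrt M * Real.sqrt (2 * ε ^ 2 - ε ^ 4)
        ≤ ‖(E * C₀ * PauliTensor n s₁).trace‖ / (2 : ℝ) ^ n
          - ‖(E * C₀ * PauliTensor n s₀).trace‖ / (2 : ℝ) ^ n :=
  trace_gap_bound_general n ε hε0 hε1 E hE hEtr r C₀ hC₀ M hM hr s₁ hs₁ s₀ hs₀
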